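/- A Heinlein wall of size r (for any positive integer r) has pathwidth at most 5. -/

import Mathlib

/-!
Put `a*` and `b*` into every bag. Concatenating `P^1, …, P^r` gives one path through all the
`u`-vertices; slide a window of two consecutive vertices along it, and while the window starts
in `P^j` add `z_{j-1}` and `z_j`, which are the only `z`-neighbours of `P^j`. Every bag then has
at most `6` vertices, and each vertex lies in a run of consecutive bags: `a*` and `b*` in all,
a `u`-vertex in at most two adjacent ones, and `z_t` in those of `P^t` and `P^{t+1}`.
-/

/-- Vertices of a Heinlein wall of size `r`: path vertices `u j i` (path `j`,
position `i`, both 0-based), bottleneck vertices `z t` (`t = 0, …, r`), and the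
terminals `a`, `b`.  We write `c = z 0` and `d = z r`. -/
inductive HWVert (r : ℕ) where
  | u : Fin r → Fin (2 * r) → HWVert r
  | z : Fin (r + 1) → HWVert r
  | a : HWVert r
  | b : HWVert r
deriving DecidableEq

/-- The defining relation of the Heinlein wall (paper 1-based indices translated
to 0-based ones): `u j i — u j (i+1)`; `z t — u j i` for `i` even iff `t = j`
and for `i` odd iff `t = j + 1`; `z t — z (t+1)`; `a — u j 0`; `b — u j (2r-1)`. -/
def HWRel (r : ℕ) : HWVert r → HWVert r → Prop := fun x y =>
  match x, y with
  | .u j i, .u j' i' => j = j' ∧ i'.val = i.val + 1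
  | .z t, .u j i => (i.val % 2 = 0 ∧ t.val = j.val) ∨ (i.val % 2 = 1 ∧ t.val = j.val + 1)
  | .z t, .z t' => t'.val = t.val + 1
  | .a, .u _ i => i.val = 0
  | .b, .u _ i => i.val = 2 * r - 1
  | _, _ => False

/-- The Heinlein wall of size `r`. -/
def HW (r : ℕ) : SimpleGraph (HWVert r) := SimpleGraph.fromRel (HWRel r)

namespace HW

open Finset

variable {r : ℕ}

def zAt (t : ℕ) : Finset (HWVert r) :=
  if h : t < r + 1 then {.z ⟨t, h⟩} else ∅

/-- The index of `u j i` on the concatenated path `P^1 ⋯ P^r`. -/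
def pos (j : Fin r) (i : Fin (2 * r)) : ℕ := finProdFinEquiv (j, i)

lemma pos_eq (j : Fin r) (i : Fin (2 * r)) : pos j i = i + 2 * r * j := rfl

lemma pos_lt (j : Fin r) (i : Fin (2 * r)) : pos j i < r * (2 * r) :=
  (finProdFinEquiv (j, i)).isLt

lemma pos_div (j : Fin r) (i : Fin (2 * r)) : pos j i / (2 * r) = j := by
  rw [pos_eq, Nat.add_mul_div_left _ _ i.pos, Nat.div_eq_of_lt i.isLt, zero_add]

def uAt (p : ℕ) : Finset (HWVert r) :=
  if h : p < r * (2 * r) then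
    {.u (finProdFinEquiv.symm ⟨p, h⟩).1 (finProdFinEquiv.symm ⟨p, h⟩).2}
  else ∅

lemma z_mem_zAt {t : Fin (r + 1)} {s : ℕ} :
    .z t ∈ (zAt s : Finset (HWVert r)) ↔ (t : ℕ) = s := by
  unfold zAt
  split_ifs with h
  · simp [Fin.ext_iff, eq_comm]
  · simp only [notMem_empty, false_iff]
    omega

lemma u_mem_uAt {j : Fin r} {i : Fin (2 * r)} {p : ℕ} :
    .u j i ∈ (uAt p : Finset (HWVert r)) ↔ pos j i = p := by
  unfold uAt
  split_ifs with h
  · rw [mem_singleton, HWVert.u.injEq, ← Prod.mk.injEq, Prod.mk.eta, Equiv.eq_symm_apply,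
      Fin.ext_iff]
    rfl
  · simp only [notMem_empty, false_iff]
    exact fun hp => h (hp ▸ pos_lt j i)

lemma u_notMem_zAt {j : Fin r} {i : Fin (2 * r)} {s : ℕ} :
    .u j i ∉ (zAt s : Finset (HWVert r)) := by
  unfold zAt; split_ifs <;> simp

lemma z_notMem_uAt {t : Fin (r + 1)} {p : ℕ} : .z t ∉ (uAt p : Finset (HWVert r)) := by
  unfold uAt; split_ifs <;> simp

lemma card_zAt_le (t : ℕ) : #(zAt t : Finset (HWVert r)) ≤ 1 := by
  unfold zAt; split_ifs <;> simp

lemma card_uAt_le (p : ℕ) : #(uAt p : Finset (HWVert r)) ≤ 1 := by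
  unfold uAt; split_ifs <;> simp

variable (r) in
def bag (k : ℕ) : Finset (HWVert r) :=
  {.a, .b} ∪ zAt (k / (2 * r)) ∪ zAt (k / (2 * r) + 1) ∪ uAt k ∪ uAt (k + 1)

lemma card_bag_le (k : ℕ) : #(bag r k) ≤ 6 := by
  unfold bag
  grw [card_union_le, card_union_le, card_union_le, card_union_le, card_le_two,
    card_zAt_le, card_zAt_le, card_uAt_le, card_uAt_le]

lemma a_mem_bag (k : ℕ) : .a ∈ bag r k := by simp [bag]

lemma b_mem_bag (k : ℕ) : .b ∈ bag r k := by simp [bag]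

lemma z_mem_bag {t : Fin (r + 1)} {k : ℕ} :
    .z t ∈ bag r k ↔ (t : ℕ) = k / (2 * r) ∨ (t : ℕ) = k / (2 * r) + 1 := by
  simp [bag, z_mem_zAt, z_notMem_uAt]

lemma u_mem_bag {j : Fin r} {i : Fin (2 * r)} {k : ℕ} :
    .u j i ∈ bag r k ↔ pos j i = k ∨ pos j i = k + 1 := by
  simp [bag, u_mem_uAt, u_notMem_zAt]

lemma u_mem_bag_pos (j : Fin r) (i : Fin (2 * r)) : .u j i ∈ bag r (pos j i) :=
  u_mem_bag.2 (Or.inl rfl)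

lemma z_mem_bag_pos {t : Fin (r + 1)} {j : Fin r} (i : Fin (2 * r)) :
    .z t ∈ bag r (pos j i) ↔ (t : ℕ) = j ∨ (t : ℕ) = j + 1 := by
  rw [z_mem_bag, pos_div]

lemma ordConnected_setOf_mem_bag (v : HWVert r) : {k | v ∈ bag r k}.OrdConnected := by
  refine ⟨fun k₁ h₁ k₃ h₃ k₂ ⟨h₁₂, h₂₃⟩ => ?_⟩
  simp only [Set.mem_ofPred_eq] at *
  cases v with
  | a => exact a_mem_bag k₂
  | b => exact b_mem_bag k₂
  | z t =>
    have := Nat.div_le_div_right (c := 2 * r) h₁₂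
    have := Nat.div_le_div_right (c := 2 * r) h₂₃
    rw [z_mem_bag] at *
    omega
  | u j i =>
    rw [u_mem_bag] at *
    omega

lemma exists_mem_bag_of_rel {x y : HWVert r} (h : HWRel r x y) :
    ∃ k < r * (2 * r), x ∈ bag r k ∧ y ∈ bag r k := by
  cases x <;> cases y <;> simp only [HWRel] at h
  case u.u j i j' i' =>
    obtain ⟨rfl, h⟩ := h
    exact ⟨pos j i, pos_lt j i, u_mem_bag_pos j i,
      u_mem_bag.2 (Or.inr (by simp only [pos_eq]; omega))⟩
  case z.u t j i =>
    exact ⟨pos j i, pos_lt j i, (z_mem_bag_pos i).2 (by omega), u_mem_bag_pos j i⟩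
  case z.z t t' =>
    have ht : (t : ℕ) < r := by omega
    exact ⟨pos ⟨t, ht⟩ ⟨0, by omega⟩, pos_lt _ _, (z_mem_bag_pos _).2 (Or.inl rfl),
      (z_mem_bag_pos _).2 (Or.inr h)⟩
  case a.u j i => exact ⟨pos j i, pos_lt j i, a_mem_bag _, u_mem_bag_pos j i⟩
  case b.u j i => exact ⟨pos j i, pos_lt j i, b_mem_bag _, u_mem_bag_pos j i⟩

lemma exists_mem_bag_of_adj {x y : HWVert r} (h : (HW r).Adj x y) :
    ∃ k < r * (2 * r), x ∈ bag r k ∧ y ∈ bag r k := by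
  rcases ((SimpleGraph.fromRel_adj _ _ _).1 h).2 with h | h
  · exact exists_mem_bag_of_rel h
  · obtain ⟨k, hk, hy, hx⟩ := exists_mem_bag_of_rel h
    exact ⟨k, hk, hx, hy⟩

lemma exists_mem_bag (hr : 1 ≤ r) : ∀ v : HWVert r, ∃ k < r * (2 * r), v ∈ bag r k
  | .a => ⟨0, Nat.mul_pos hr (by omega), a_mem_bag 0⟩
  | .b => ⟨0, Nat.mul_pos hr (by omega), b_mem_bag 0⟩
  | .z t =>
    ⟨pos ⟨t - 1, by omega⟩ ⟨0, by omega⟩, pos_lt _ _, (z_mem_bag_pos _).2 (by dsimp only; omega)⟩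
  | .u j i => ⟨pos j i, pos_lt j i, u_mem_bag_pos j i⟩

end HW

/-- A Heinlein wall of size `r ≥ 1` has pathwidth at most `5`: it admits a path
decomposition all of whose bags have at most `5 + 1 = 6` vertices. -/
theorem heinleinWall_pathwidth_le_five (r : ℕ) (hr : 1 ≤ r) :
    ∃ (n : ℕ) (Bags : Fin (n + 1) → Finset (HWVert r)),
      (∀ v, ∃ i, v ∈ Bags i) ∧
      (∀ x y, (HW r).Adj x y → ∃ i, x ∈ Bags i ∧ y ∈ Bags i) ∧
      (∀ i j k : Fin (n + 1), i ≤ j → j ≤ k →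
        ∀ v, v ∈ Bags i → v ∈ Bags k → v ∈ Bags j) ∧
      (∀ i, (Bags i).card ≤ 5 + 1) := by
  have hn : r * (2 * r) - 1 + 1 = r * (2 * r) := Nat.sub_add_cancel (Nat.mul_pos hr (by omega))
  refine ⟨r * (2 * r) - 1, fun k => HW.bag r k, fun v => ?_, fun x y hxy => ?_,
    fun i j k hij hjk v hi hk => (HW.ordConnected_setOf_mem_bag v).out hi hk ⟨hij, hjk⟩,
    fun k => HW.card_bag_le k⟩
  · obtain ⟨k, hk, hv⟩ := HW.exists_mem_bag hr v
    exact ⟨⟨k, hn ▸ hk⟩, hv⟩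
  · obtain ⟨k, hk, hx, hy⟩ := HW.exists_mem_bag_of_adj hxy
    exact ⟨⟨k, hn ▸ hk⟩, hx, hy⟩
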